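/- Let n ∈ ℤ_{−ε} with n < 0, and set k = −n > 0. Then in the module π(ε,n), the subspace W = span{v_j : j ∈ ℤ_ε, |j| ≤ k−1} is a submodule of dimension k, it is the unique nonzero irreducible submodule of π(ε,n), and the quotient module V_ε/W is completely reducible: it is the direct sum of the two irreducible submodules given by the images of span{v_j : j ≥ k+1} and span{v_j : j ≤ −(k+1)}. -/

import Mathlib

/-!
`H` is diagonal with distinct eigenvalues, so an `H`-invariant subspace is spanned by the
basis vectors `v_j` it contains. In `π(ε, n)` with `k = -n`, `E v_j` is a nonzero multiple of
`v_{j+2}` except at `j = k - 1`, and `F v_j` a nonzero multiple of `v_{j-2}` except at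
`j = 1 - k`. Climbing and descending these ladders, every nonzero submodule contains some `v_j`,
hence `v_{k-1}`, hence all of `W` (so `W` is the only irreducible one), and a submodule
containing some `v_j` with `j > k - 1` (resp. `j < 1 - k`) contains every such `v_j`. So the
only submodules between `W` and `span{v_j : j ≥ 1 - k}` are these two, which makes the image of
`span{v_j : j ≥ k + 1}` irreducible in `V_ε / W`; the lower half is symmetric.
-/

namespace SL2Deform

/-- The index set `ℤ_ε = {j : ℤ | (-1)^j = ε}`, for a sign `ε ∈ {1, -1}`
(i.e. a unit of `ℤ`). -/
abbrev idx (ε : ℤˣ) : Type := {j : ℤ // (-1 : ℤˣ) ^ j = ε}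

/-- `V ε`: the complex vector space of finitely supported functions on `ℤ_ε`,
with standard basis `{v_j}`. -/
abbrev V (ε : ℤˣ) : Type := idx ε →₀ ℂ

/-- The standard basis vector `v_j` of `V ε`, for `j ∈ ℤ_ε`. -/
noncomputable def bv (ε : ℤˣ) (j : ℤ) (h : (-1 : ℤˣ) ^ j = ε) : V ε :=
  Finsupp.single ⟨j, h⟩ 1

lemma parity_two : (-1 : ℤˣ) ^ (2 : ℤ) = 1 := by decide
lemma parity_neg_two : (-1 : ℤˣ) ^ (-2 : ℤ) = 1 := by decide
lemma parity_zero : (-1 : ℤˣ) ^ (0 : ℤ) = 1 := by decide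

lemma parity_shift {ε : ℤˣ} {j : ℤ} (h : (-1 : ℤˣ) ^ j = ε) {s : ℤ}
    (hs : (-1 : ℤˣ) ^ s = 1) : (-1 : ℤˣ) ^ (j + s) = ε := by
  rw [zpow_add, h, hs, mul_one]

/-- If `m ∈ ℤ_{-ε}` then `m + 1 ∈ ℤ_ε`. -/
lemma parity_succ {ε : ℤˣ} {m : ℤ} (h : (-1 : ℤˣ) ^ m = -ε) :
    (-1 : ℤˣ) ^ (m + 1) = ε := by
  rw [zpow_add, h, zpow_one]
  simp

/-- If `m ∈ ℤ_{-ε}` then `m - 1 ∈ ℤ_ε`. -/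
lemma parity_pred {ε : ℤˣ} {m : ℤ} (h : (-1 : ℤˣ) ^ m = -ε) :
    (-1 : ℤˣ) ^ (m - 1) = ε := by
  rw [sub_eq_add_neg, zpow_add, h, zpow_neg, zpow_one]
  simp

/-- The linear operator on `V ε` sending `v_j` to `c j • v_{j+s}`,
for an even shift `s`. -/
noncomputable def shiftOp (ε : ℤˣ) (s : ℤ) (hs : (-1 : ℤˣ) ^ s = 1) (c : ℤ → ℂ) :
    V ε →ₗ[ℂ] V ε :=
  Finsupp.lsum ℂ fun j =>
    LinearMap.toSpanSingleton ℂ (V ε)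
      (Finsupp.single ⟨j.1 + s, parity_shift j.2 hs⟩ (c j.1))

/-- `H v_j = j • v_j`. -/
noncomputable def Hop (ε : ℤˣ) : V ε →ₗ[ℂ] V ε :=
  shiftOp ε 0 parity_zero fun j => (j : ℂ)

/-- Principal series: `E v_j = ½(ν + j + 1) • v_{j+2}`. -/
noncomputable def Eop (ε : ℤˣ) (ν : ℂ) : V ε →ₗ[ℂ] V ε :=
  shiftOp ε 2 parity_two fun j => (1 / 2 : ℂ) * (ν + j + 1)

/-- Principal series: `F v_j = ½(ν - j + 1) • v_{j-2}`. -/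
noncomputable def Fop (ε : ℤˣ) (ν : ℂ) : V ε →ₗ[ℂ] V ε :=
  shiftOp ε (-2) parity_neg_two fun j => (1 / 2 : ℂ) * (ν - j + 1)

/-- `f_m(ν) = ½ |ν²-m²|^{1/2} (ν+m)/|ν+m|` for `ν ≠ -m`, and `f_m(-m) = 0`. -/
noncomputable def fm (m : ℤ) (ν : ℂ) : ℂ :=
  if ν = -(m : ℂ) then 0
  else (1 / 2 : ℂ) * (Real.sqrt (‖ν ^ 2 - (m : ℂ) ^ 2‖) : ℝ) * (ν + m) /
    (‖ν + (m : ℂ)‖ : ℝ)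

/-- Deformed module: `E v_{m-1} = f_m(ν) • v_{m+1}`, i.e. `E v_j = f_{j+1}(ν) • v_{j+2}`. -/
noncomputable def PEop (ε : ℤˣ) (ν : ℂ) : V ε →ₗ[ℂ] V ε :=
  shiftOp ε 2 parity_two fun j => fm (j + 1) ν

/-- Deformed module: `F v_{m+1} = f_{-m}(ν) • v_{m-1}`, i.e. `F v_j = f_{-(j-1)}(ν) • v_{j-2}`. -/
noncomputable def PFop (ε : ℤˣ) (ν : ℂ) : V ε →ₗ[ℂ] V ε :=
  shiftOp ε (-2) parity_neg_two fun j => fm (1 - j) ν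

/-- The module `π'(ε,ν)`: `E v_{m-1} = ½(ν - |m|) • v_{m+1}`,
i.e. `E v_j = ½(ν - |j+1|) • v_{j+2}`. -/
noncomputable def E'op (ε : ℤˣ) (ν : ℂ) : V ε →ₗ[ℂ] V ε :=
  shiftOp ε 2 parity_two fun j => (1 / 2 : ℂ) * (ν - ((|j + 1| : ℤ) : ℂ))

/-- The module `π'(ε,ν)`: `F v_{m+1} = ½(ν + |m|) • v_{m-1}`,
i.e. `F v_j = ½(ν + |j-1|) • v_{j-2}`. -/
noncomputable def F'op (ε : ℤˣ) (ν : ℂ) : V ε →ₗ[ℂ] V ε :=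
  shiftOp ε (-2) parity_neg_two fun j => (1 / 2 : ℂ) * (ν + ((|j - 1| : ℤ) : ℂ))

/-- `ν ∈ ℤ_{-ε}`: `ν` is an integer with `(-1)^ν = -ε`. -/
def inZminus (ε : ℤˣ) (ν : ℂ) : Prop :=
  ∃ n : ℤ, ν = (n : ℂ) ∧ (-1 : ℤˣ) ^ n = -ε

section ModuleNotions

variable {M : Type*} [AddCommGroup M] [Module ℂ M]
variable {N : Type*} [AddCommGroup N] [Module ℂ N]

/-- `W` is a submodule for the module with operators `A, B, C`: it is invariant
under all three operators. -/
def Invariant (A B C : M →ₗ[ℂ] M) (W : Submodule ℂ M) : Prop :=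
  (∀ x ∈ W, A x ∈ W) ∧ (∀ x ∈ W, B x ∈ W) ∧ (∀ x ∈ W, C x ∈ W)

/-- The module with operators `A, B, C` is irreducible: its only submodules are
`0` and the whole space. -/
def IsIrreducibleRep (A B C : M →ₗ[ℂ] M) : Prop :=
  ∀ W : Submodule ℂ M, Invariant A B C W → W = ⊥ ∨ W = ⊤

/-- `W` is an irreducible submodule: invariant, nonzero, and with no nonzero
proper invariant subspace. -/
def IsIrreducibleSubmodule (A B C : M →ₗ[ℂ] M) (W : Submodule ℂ M) : Prop :=
  Invariant A B C W ∧ W ≠ ⊥ ∧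
    ∀ U : Submodule ℂ M, Invariant A B C U → U ≤ W → U = ⊥ ∨ U = W

/-- The module with operators `A, B, C` is completely reducible: every invariant
subspace has an invariant complement. -/
def CompletelyReducible (A B C : M →ₗ[ℂ] M) : Prop :=
  ∀ W : Submodule ℂ M, Invariant A B C W →
    ∃ U : Submodule ℂ M, Invariant A B C U ∧ IsCompl W U

/-- The two modules (given by operator triples) are isomorphic. -/
def Intertwined (A B C : M →ₗ[ℂ] M) (A' B' C' : N →ₗ[ℂ] N) : Prop :=
  ∃ e : M ≃ₗ[ℂ] N, (∀ x, e (A x) = A' (e x)) ∧ (∀ x, e (B x) = B' (e x)) ∧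
    (∀ x, e (C x) = C' (e x))

/-- An invariant Hermitian form for the module with operators `A, B, C`
(`A` playing the role of `H`, `B` of `E`, `C` of `F`): a sesquilinear form,
conjugate-symmetric, with `⟨Hv,w⟩ = ⟨v,Hw⟩`, `⟨Ev,w⟩ + ⟨v,Fw⟩ = 0`,
`⟨Fv,w⟩ + ⟨v,Ew⟩ = 0`. -/
structure IsInvHermForm (A B C : M →ₗ[ℂ] M) (Φ : M → M → ℂ) : Prop where
  add_left : ∀ u v w, Φ (u + v) w = Φ u w + Φ v w
  smul_left : ∀ (a : ℂ) (v w : M), Φ (a • v) w = a * Φ v w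
  conj_symm : ∀ v w, Φ w v = (starRingEnd ℂ) (Φ v w)
  inv_A : ∀ v w, Φ (A v) w = Φ v (A w)
  inv_BC : ∀ v w, Φ (B v) w + Φ v (C w) = 0
  inv_CB : ∀ v w, Φ (C v) w + Φ v (B w) = 0

end ModuleNotions

/-- `span{v_j : j ≥ n}`. -/
noncomputable def spanGE (ε : ℤˣ) (n : ℤ) : Submodule ℂ (V ε) :=
  Submodule.span ℂ {x : V ε | ∃ j : idx ε, n ≤ j.1 ∧ x = Finsupp.single j 1}

/-- `span{v_j : j ≤ n}`. -/
noncomputable def spanLE (ε : ℤˣ) (n : ℤ) : Submodule ℂ (V ε) :=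
  Submodule.span ℂ {x : V ε | ∃ j : idx ε, j.1 ≤ n ∧ x = Finsupp.single j 1}

/-- `span{v_j : |j| ≤ n}`. -/
noncomputable def spanAbsLE (ε : ℤˣ) (n : ℤ) : Submodule ℂ (V ε) :=
  Submodule.span ℂ {x : V ε | ∃ j : idx ε, |j.1| ≤ n ∧ x = Finsupp.single j 1}

/-- The diagonal operator `S v_j = c j • v_j`. -/
noncomputable def diagMap (ε : ℤˣ) (c : idx ε → ℂ) : V ε →ₗ[ℂ] V ε :=
  Finsupp.lsum ℂ fun j => LinearMap.toSpanSingleton ℂ (V ε) (Finsupp.single j (c j))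

lemma two_dvd_sub_of_zpow_eq {ε : ℤˣ} {a b : ℤ} (ha : (-1 : ℤˣ) ^ a = ε)
    (hb : (-1 : ℤˣ) ^ b = ε) : (2 : ℤ) ∣ b - a := by
  have h : (-1 : ℤˣ) ^ (b - a) = 1 := by rw [zpow_sub, ha, hb, mul_inv_cancel]
  rcases Int.even_or_odd (b - a) with ⟨c, hc⟩ | ⟨c, hc⟩
  · exact ⟨c, by omega⟩
  · rw [hc, zpow_add, zpow_mul, parity_two, one_zpow, one_mul, zpow_one] at h
    exact absurd h (by decide)

lemma zpow_neg_sub_one {ε : ℤˣ} {n : ℤ} (hn : (-1 : ℤˣ) ^ n = -ε) :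
    (-1 : ℤˣ) ^ (-n - 1) = ε := by
  rw [show -n - 1 = -(n + 1) by ring, zpow_neg, Int.units_inv_eq_self, parity_succ hn]

lemma le_induction_two {P : ℤ → Prop} {a b : ℤ} (hab : a ≤ b) (hpar : (2 : ℤ) ∣ b - a)
    (ha : P a) (step : ∀ s, a ≤ s → s < b → P s → P (s + 2)) : P b := by
  obtain ⟨c, hc⟩ := hpar
  have key : ∀ d, 0 ≤ d → d ≤ c → P (a + 2 * d) := by
    intro d hd
    induction d, hd using Int.leInduction with
    | base => exact fun _ => by simpa using ha
    | succ d hd ih =>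
      intro hdc
      rw [show a + 2 * (d + 1) = a + 2 * d + 2 by ring]
      exact step _ (by omega) (by omega) (ih (by omega))
  simpa [show a + 2 * c = b by omega] using key c (by omega) le_rfl

section Diagonal

variable {ι : Type*} {c : ι → ℂ} {T : (ι →₀ ℂ) →ₗ[ℂ] (ι →₀ ℂ)}

/-- Removing the other coordinates one at a time: `T x - c k • x` kills coordinate `k` and
rescales coordinate `j` by `c j - c k ≠ 0`. -/
lemma single_apply_mem_of_diagonal (hc : Function.Injective c) (hT : ∀ x i, T x i = c i * x i)
    {U : Submodule ℂ (ι →₀ ℂ)} (hU : ∀ x ∈ U, T x ∈ U) {x : ι →₀ ℂ} (hx : x ∈ U) (j : ι) :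
    Finsupp.single j (x j) ∈ U := by
  classical
  suffices h : ∀ s : Finset ι, ∀ x ∈ U, (∀ i ∉ insert j s, x i = 0) →
      Finsupp.single j (x j) ∈ U from
    h x.support x hx fun i hi => Finsupp.notMem_support_iff.mp fun h => hi (by simp [h])
  intro s
  induction s using Finset.induction_on with
  | empty =>
    intro x hx hsupp
    convert hx using 1
    ext i
    rcases eq_or_ne i j with rfl | hij
    · rw [Finsupp.single_eq_same]
    · rw [Finsupp.single_eq_of_ne hij, hsupp i (by simpa using hij)]
  | insert k s hk ih =>
    intro x hx hsupp
    by_cases hkj : k = j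
    · subst hkj
      exact ih x hx fun i hi => hsupp i (by simpa using hi)
    have hy : ∀ i, (T x - c k • x) i = (c i - c k) * x i := fun i => by
      rw [Finsupp.sub_apply, hT, Finsupp.smul_apply, smul_eq_mul, sub_mul]
    have hyU := ih _ (U.sub_mem (hU x hx) (U.smul_mem _ hx)) fun i hi => by
      rw [hy]
      by_cases hik : i = k
      · rw [hik, sub_self, zero_mul]
      · rw [hsupp i (by simp_all), mul_zero]
    rwa [hy, ← smul_eq_mul, ← Finsupp.smul_single,
      U.smul_mem_iff (sub_ne_zero.mpr (hc.ne (Ne.symm hkj)))] at hyU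

lemma exists_single_one_mem_of_not_le_supported (hc : Function.Injective c)
    (hT : ∀ x i, T x i = c i * x i) {U : Submodule ℂ (ι →₀ ℂ)} (hU : ∀ x ∈ U, T x ∈ U)
    {S : Set ι} (hUS : ¬ U ≤ Finsupp.supported ℂ ℂ S) :
    ∃ j ∉ S, Finsupp.single j (1 : ℂ) ∈ U := by
  obtain ⟨x, hx, hxS⟩ := SetLike.not_le_iff_exists.mp hUS
  obtain ⟨j, hj, hjS⟩ := Set.not_subset.mp (mt (Finsupp.mem_supported ℂ x).mpr hxS)
  have hxj : x j ≠ 0 := Finsupp.mem_support_iff.mp hj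
  refine ⟨j, hjS, ?_⟩
  simpa [Finsupp.smul_single, hxj] using
    U.smul_mem (x j)⁻¹ (single_apply_mem_of_diagonal hc hT hU hx j)

end Diagonal

section Operators

variable {ε : ℤˣ}

lemma shiftOp_single (s : ℤ) (hs : (-1 : ℤˣ) ^ s = 1) (c : ℤ → ℂ) (j : idx ε) (a : ℂ) :
    shiftOp ε s hs c (Finsupp.single j a)
      = Finsupp.single ⟨j.1 + s, parity_shift j.2 hs⟩ (a * c j.1) := by
  rw [shiftOp, Finsupp.lsum_single, LinearMap.toSpanSingleton_apply, Finsupp.smul_single,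
    smul_eq_mul]

lemma supported_le_comap_shiftOp {s : ℤ} {hs : (-1 : ℤˣ) ^ s = 1} {c : ℤ → ℂ}
    {S S' : Set (idx ε)} (h : ∀ j ∈ S, c j.1 = 0 ∨ ∀ h', (⟨j.1 + s, h'⟩ : idx ε) ∈ S') :
    Finsupp.supported ℂ ℂ S ≤ (Finsupp.supported ℂ ℂ S').comap (shiftOp ε s hs c) := by
  rw [Finsupp.supported_eq_span_single, Submodule.span_le]
  rintro _ ⟨j, hj, rfl⟩
  rw [SetLike.mem_coe, Submodule.mem_comap, shiftOp_single, one_mul]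
  rcases h j hj with h0 | hmem
  · rw [h0, Finsupp.single_zero]
    exact Submodule.zero_mem _
  · exact Finsupp.single_mem_supported ℂ _ (hmem _)

lemma Hop_apply (x : V ε) (i : idx ε) : Hop ε x i = (i.1 : ℂ) * x i := by
  induction x using Finsupp.induction_linear with
  | zero => simp
  | add f g hf hg => rw [map_add, Finsupp.add_apply, hf, hg, Finsupp.add_apply, mul_add]
  | single j a =>
    rw [Hop, shiftOp_single]
    simp only [add_zero]
    rcases eq_or_ne j i with rfl | hne
    · rw [Finsupp.single_eq_same, Finsupp.single_eq_same, mul_comm]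
    · rw [Finsupp.single_eq_of_ne hne.symm, Finsupp.single_eq_of_ne hne.symm, mul_zero]

lemma coe_idx_injective : Function.Injective fun i : idx ε => (i.1 : ℂ) :=
  fun _ _ h => Subtype.ext (Int.cast_injective h)

lemma supported_le_comap_Hop (S : Set (idx ε)) :
    Finsupp.supported ℂ ℂ S ≤ (Finsupp.supported ℂ ℂ S).comap (Hop ε) :=
  supported_le_comap_shiftOp fun j hj => Or.inr fun _ => by simpa using hj

lemma span_single_one_eq_supported {ι : Type*} (p : ι → Prop) :
    Submodule.span ℂ {x : ι →₀ ℂ | ∃ j, p j ∧ x = Finsupp.single j 1}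
      = Finsupp.supported ℂ ℂ {j | p j} := by
  rw [Finsupp.supported_eq_span_single]
  congr 1
  ext x
  exact ⟨fun ⟨j, hj, h⟩ => ⟨j, hj, h.symm⟩, fun ⟨j, hj, h⟩ => ⟨j, hj, h.symm⟩⟩

lemma single_one_mem_supported_iff {ι : Type*} {S : Set ι} {j : ι} :
    Finsupp.single j (1 : ℂ) ∈ Finsupp.supported ℂ ℂ S ↔ j ∈ S :=
  ⟨fun h => (Finsupp.mem_supported ℂ _).mp h (by simp), Finsupp.single_mem_supported ℂ 1⟩

lemma spanGE_eq_supported (a : ℤ) : spanGE ε a = Finsupp.supported ℂ ℂ {j | a ≤ j.1} :=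
  span_single_one_eq_supported _

lemma spanLE_eq_supported (a : ℤ) : spanLE ε a = Finsupp.supported ℂ ℂ {j | j.1 ≤ a} :=
  span_single_one_eq_supported _

lemma spanAbsLE_eq_supported (a : ℤ) :
    spanAbsLE ε a = Finsupp.supported ℂ ℂ {j | |j.1| ≤ a} :=
  span_single_one_eq_supported _

end Operators

section Quotient

variable {M : Type*} [AddCommGroup M] [Module ℂ M] {A B C : M →ₗ[ℂ] M}

lemma Invariant.inf {W W' : Submodule ℂ M} (h : Invariant A B C W) (h' : Invariant A B C W') :
    Invariant A B C (W ⊓ W') :=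
  ⟨fun x hx => ⟨h.1 x hx.1, h'.1 x hx.2⟩, fun x hx => ⟨h.2.1 x hx.1, h'.2.1 x hx.2⟩,
    fun x hx => ⟨h.2.2 x hx.1, h'.2.2 x hx.2⟩⟩

variable {W : Submodule ℂ M} (hA : W ≤ W.comap A) (hB : W ≤ W.comap B) (hC : W ≤ W.comap C)
include hA hB hC

lemma Invariant.map_mkQ {Y : Submodule ℂ M} (hY : Invariant A B C Y) :
    Invariant (W.mapQ W A hA) (W.mapQ W B hB) (W.mapQ W C hC) (Y.map W.mkQ) := by
  refine ⟨?_, ?_, ?_⟩ <;> rintro _ ⟨y, hy, rfl⟩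
  exacts [⟨A y, hY.1 y hy, rfl⟩, ⟨B y, hY.2.1 y hy, rfl⟩, ⟨C y, hY.2.2 y hy, rfl⟩]

lemma Invariant.comap_mkQ {U : Submodule ℂ (M ⧸ W)}
    (hU : Invariant (W.mapQ W A hA) (W.mapQ W B hB) (W.mapQ W C hC) U) :
    Invariant A B C (U.comap W.mkQ) :=
  ⟨fun _ hx => hU.1 _ hx, fun _ hx => hU.2.1 _ hx, fun _ hx => hU.2.2 _ hx⟩

omit hA hB hC in
lemma isCompl_map_mkQ {X Y : Submodule ℂ M} (hdisj : Disjoint X (W ⊔ Y))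
    (hcodisj : W ⊔ X ⊔ Y = ⊤) :
    IsCompl (X.map W.mkQ) (Y.map W.mkQ) := by
  constructor
  · rw [Submodule.disjoint_def]
    rintro _ ⟨x, hx, rfl⟩ ⟨y, hy, hxy⟩
    have hxW : y - x ∈ W := (Submodule.Quotient.eq W).mp hxy
    have hx0 : x = 0 := (Submodule.disjoint_def.mp hdisj) x hx
      (by simpa using Submodule.add_mem_sup (W.neg_mem hxW) hy)
    rw [hx0, map_zero]
  · rw [codisjoint_iff, ← Submodule.map_sup, eq_top_iff, ← Submodule.range_mkQ W,
      ← Submodule.map_top, ← hcodisj, sup_assoc, Submodule.map_sup, Submodule.mkQ_map_self,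
      bot_sup_eq]

lemma isIrreducibleSubmodule_map_mkQ {X : Submodule ℂ M} (hX : Invariant A B C (W ⊔ X))
    (hXW : ¬ X ≤ W)
    (hmin : ∀ U, Invariant A B C U → W ≤ U → U ≤ W ⊔ X → U = W ∨ U = W ⊔ X) :
    IsIrreducibleSubmodule (W.mapQ W A hA) (W.mapQ W B hB) (W.mapQ W C hC) (X.map W.mkQ) := by
  have hmap : (W ⊔ X).map W.mkQ = X.map W.mkQ := by
    rw [Submodule.map_sup, Submodule.mkQ_map_self, bot_sup_eq]
  refine ⟨hmap ▸ hX.map_mkQ hA hB hC, ?_, fun U hU hUX => ?_⟩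
  · rwa [Ne, eq_bot_iff, Submodule.map_le_iff_le_comap, Submodule.comap_bot, Submodule.ker_mkQ]
  · have hWU : W ≤ U.comap W.mkQ := fun x hx => by
      rw [Submodule.mem_comap, Submodule.mkQ_apply, (Submodule.Quotient.mk_eq_zero W).mpr hx]
      exact U.zero_mem
    have hUX' : U.comap W.mkQ ≤ W ⊔ X := by
      simpa only [Submodule.comap_map_mkQ] using Submodule.comap_mono (f := W.mkQ) hUX
    rw [← Submodule.map_comap_eq_of_surjective W.mkQ_surjective U, ← hmap]
    rcases hmin _ (hU.comap_mkQ hA hB hC) hWU hUX' with h | h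
    · exact Or.inl (by rw [h, Submodule.mkQ_map_self])
    · exact Or.inr (by rw [h])

end Quotient

section Ladder

variable {ε : ℤˣ} {n : ℤ} {U : Submodule ℂ (V ε)}
  (hU : Invariant (Hop ε) (Eop ε (n : ℂ)) (Fop ε (n : ℂ)) U)
include hU

/-- The coefficient `(n + j + 1) / 2` of `E v_j` vanishes only at `j = -n - 1`. -/
lemma exists_single_add_two_mem {j : idx ε} (hj : Finsupp.single j 1 ∈ U)
    (hjn : j.1 ≠ -n - 1) :
    ∃ h, Finsupp.single (⟨j.1 + 2, h⟩ : idx ε) 1 ∈ U := by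
  have hE := hU.2.1 _ hj
  rw [Eop, shiftOp_single, one_mul, ← Finsupp.smul_single_one] at hE
  have hc : (1 / 2 : ℂ) * ((n : ℂ) + (j.1 : ℂ) + 1) ≠ 0 := by
    have h : ((n + j.1 + 1 : ℤ) : ℂ) ≠ 0 := Int.cast_ne_zero.mpr (by omega)
    push_cast at h
    exact mul_ne_zero (by norm_num) h
  exact ⟨_, (U.smul_mem_iff hc).mp hE⟩

/-- The coefficient `(n - j + 1) / 2` of `F v_j` vanishes only at `j = n + 1`. -/
lemma exists_single_add_neg_two_mem {j : idx ε} (hj : Finsupp.single j 1 ∈ U)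
    (hjn : j.1 ≠ n + 1) :
    ∃ h, Finsupp.single (⟨j.1 + -2, h⟩ : idx ε) 1 ∈ U := by
  have hF := hU.2.2 _ hj
  rw [Fop, shiftOp_single, one_mul, ← Finsupp.smul_single_one] at hF
  have hc : (1 / 2 : ℂ) * ((n : ℂ) - (j.1 : ℂ) + 1) ≠ 0 := by
    have h : ((n - j.1 + 1 : ℤ) : ℂ) ≠ 0 := Int.cast_ne_zero.mpr (by omega)
    push_cast at h
    exact mul_ne_zero (by norm_num) h
  exact ⟨_, (U.smul_mem_iff hc).mp hF⟩

lemma single_mem_of_le {a b : idx ε} (ha : Finsupp.single a 1 ∈ U) (hab : a.1 ≤ b.1)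
    (hwall : b.1 ≤ -n - 1 ∨ -n - 1 < a.1) : Finsupp.single b 1 ∈ U := by
  obtain ⟨_, hb⟩ : ∃ h, Finsupp.single (⟨b.1, h⟩ : idx ε) 1 ∈ U :=
    le_induction_two (P := fun t => ∃ h, Finsupp.single (⟨t, h⟩ : idx ε) 1 ∈ U) hab
      (two_dvd_sub_of_zpow_eq a.2 b.2) ⟨a.2, ha⟩
      fun s has hsb ⟨_, hs⟩ => exists_single_add_two_mem hU hs (by dsimp only; omega)
  exact hb

lemma single_mem_of_ge {a b : idx ε} (ha : Finsupp.single a 1 ∈ U) (hba : b.1 ≤ a.1)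
    (hwall : n + 1 ≤ b.1 ∨ a.1 < n + 1) : Finsupp.single b 1 ∈ U := by
  obtain ⟨_, hb⟩ : ∃ h, Finsupp.single (⟨-(-b.1), h⟩ : idx ε) 1 ∈ U :=
    le_induction_two (P := fun t => ∃ h, Finsupp.single (⟨-t, h⟩ : idx ε) 1 ∈ U)
      (neg_le_neg hba) (by rw [neg_sub_neg]; exact two_dvd_sub_of_zpow_eq b.2 a.2)
      ⟨by simpa using a.2, by simpa using ha⟩
      fun s has hsb ⟨_, hs⟩ => by
        rw [neg_add]
        exact exists_single_add_neg_two_mem hU hs (by dsimp only; omega)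
  simpa using hb

end Ladder

section PrincipalSeries

variable {ε : ℤˣ} {n : ℤ}

lemma spanAbsLE_eq_spanGE_inf_spanLE (a : ℤ) : spanAbsLE ε a = spanGE ε (-a) ⊓ spanLE ε a := by
  rw [spanAbsLE_eq_supported, spanGE_eq_supported, spanLE_eq_supported,
    ← Finsupp.supported_inter]
  congr 1
  ext j
  simp only [Set.mem_ofPred_eq, Set.mem_inter_iff, abs_le]

lemma invariant_spanGE (hn : (-1 : ℤˣ) ^ n = -ε) :
    Invariant (Hop ε) (Eop ε (n : ℂ)) (Fop ε (n : ℂ)) (spanGE ε (n + 1)) := by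
  rw [spanGE_eq_supported]
  refine ⟨supported_le_comap_Hop _, supported_le_comap_shiftOp fun j hj => Or.inr fun _ => ?_,
    supported_le_comap_shiftOp fun j hj => ?_⟩
  · exact show n + 1 ≤ j.1 + 2 by have : n + 1 ≤ j.1 := hj; omega
  · have hj : n + 1 ≤ j.1 := hj
    have hpar := two_dvd_sub_of_zpow_eq (parity_succ hn) j.2
    rcases eq_or_lt_of_le hj with h | h
    · left
      rw [← h]
      push_cast
      ring
    · exact Or.inr fun _ => show n + 1 ≤ j.1 + -2 by omega

lemma invariant_spanLE (hn : (-1 : ℤˣ) ^ n = -ε) :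
    Invariant (Hop ε) (Eop ε (n : ℂ)) (Fop ε (n : ℂ)) (spanLE ε (-n - 1)) := by
  rw [spanLE_eq_supported]
  refine ⟨supported_le_comap_Hop _, supported_le_comap_shiftOp fun j hj => ?_,
    supported_le_comap_shiftOp fun j hj => Or.inr fun _ => ?_⟩
  · have hj : j.1 ≤ -n - 1 := hj
    have hpar := two_dvd_sub_of_zpow_eq (zpow_neg_sub_one hn) j.2
    rcases eq_or_lt_of_le hj with h | h
    · left
      rw [h]
      push_cast
      ring
    · exact Or.inr fun _ => show j.1 + 2 ≤ -n - 1 by omega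
  · exact show j.1 + -2 ≤ -n - 1 by have : j.1 ≤ -n - 1 := hj; omega

lemma invariant_spanAbsLE (hn : (-1 : ℤˣ) ^ n = -ε) :
    Invariant (Hop ε) (Eop ε (n : ℂ)) (Fop ε (n : ℂ)) (spanAbsLE ε (-n - 1)) := by
  rw [spanAbsLE_eq_spanGE_inf_spanLE, neg_sub, sub_neg_eq_add, add_comm]
  exact (invariant_spanGE hn).inf (invariant_spanLE hn)

lemma spanAbsLE_sup_spanGE (hn : (-1 : ℤˣ) ^ n = -ε) (hneg : n < 0) :
    spanAbsLE ε (-n - 1) ⊔ spanGE ε (-n + 1) = spanGE ε (n + 1) := by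
  rw [spanAbsLE_eq_supported, spanGE_eq_supported, spanGE_eq_supported,
    ← Finsupp.supported_union]
  congr 1
  ext j
  have := two_dvd_sub_of_zpow_eq (parity_succ hn) j.2
  simp only [Set.mem_union, Set.mem_ofPred_eq, abs_le]
  omega

lemma spanAbsLE_sup_spanLE (hn : (-1 : ℤˣ) ^ n = -ε) (hneg : n < 0) :
    spanAbsLE ε (-n - 1) ⊔ spanLE ε (n - 1) = spanLE ε (-n - 1) := by
  rw [spanAbsLE_eq_supported, spanLE_eq_supported, spanLE_eq_supported,
    ← Finsupp.supported_union]
  congr 1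
  ext j
  have := two_dvd_sub_of_zpow_eq (parity_succ hn) j.2
  simp only [Set.mem_union, Set.mem_ofPred_eq, abs_le]
  omega

lemma isCompl_spanGE_spanLE (hn : (-1 : ℤˣ) ^ n = -ε) :
    IsCompl (spanGE ε (-n + 1)) (spanLE ε (-n - 1)) := by
  rw [spanGE_eq_supported, spanLE_eq_supported]
  constructor
  · exact Finsupp.disjoint_supported_supported (Set.disjoint_left.mpr fun j h h' => by
      simp only [Set.mem_ofPred_eq] at h h'
      omega)
  · refine Finsupp.codisjoint_supported_supported (codisjoint_iff.mpr (Set.eq_univ_of_forall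
      fun j => ?_))
    have := two_dvd_sub_of_zpow_eq (parity_succ hn) j.2
    simp only [Set.sup_eq_union, Set.mem_union, Set.mem_ofPred_eq]
    omega

lemma finrank_spanAbsLE {m : ℤ} (hm : (-1 : ℤˣ) ^ m = ε) (hm0 : 0 ≤ m) :
    Module.finrank ℂ (spanAbsLE ε m) = m.toNat + 1 := by
  classical
  set S : Set (idx ε) := {j | |j.1| ≤ m}
  have hpar : ∀ i : ℕ, (-1 : ℤˣ) ^ (-m + 2 * i) = ε := fun i => by
    rw [zpow_add, zpow_neg, hm, Int.units_inv_eq_self, zpow_mul, parity_two, one_zpow, mul_one]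
  let f : Fin (m.toNat + 1) → S := fun i =>
    ⟨⟨-m + 2 * (i : ℕ), hpar i⟩, show |-m + 2 * ((i : ℕ) : ℤ)| ≤ m by rw [abs_le]; omega⟩
  have hf : Function.Bijective f := by
    refine ⟨fun i i' h => ?_, fun j => ?_⟩
    · have h' : -m + 2 * ((i : ℕ) : ℤ) = -m + 2 * ((i' : ℕ) : ℤ) := congrArg (fun j : S => j.1.1) h
      ext
      omega
    · have hj : |j.1.1| ≤ m := j.2
      have hd := two_dvd_sub_of_zpow_eq (hpar 0) j.1.2
      rw [abs_le] at hj
      refine ⟨⟨((j.1.1 + m) / 2).toNat, by omega⟩, Subtype.ext (Subtype.ext ?_)⟩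
      show -m + 2 * (((j.1.1 + m) / 2).toNat : ℤ) = j.1.1
      omega
  have : Fintype S := Fintype.ofBijective f hf
  rw [spanAbsLE_eq_supported, (Finsupp.supportedEquivFinsupp S).finrank_eq,
    Module.finrank_finsupp_self, ← Fintype.card_fin (m.toNat + 1),
    Fintype.card_of_bijective hf]

variable {U : Submodule ℂ (V ε)}

lemma single_neg_sub_one_mem (hn : (-1 : ℤˣ) ^ n = -ε) (hneg : n < 0)
    (hU : Invariant (Hop ε) (Eop ε (n : ℂ)) (Fop ε (n : ℂ)) U) {j : idx ε}
    (hj : Finsupp.single j 1 ∈ U) :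
    Finsupp.single (⟨-n - 1, zpow_neg_sub_one hn⟩ : idx ε) 1 ∈ U := by
  rcases le_or_gt j.1 (-n - 1) with h | h
  · exact single_mem_of_le hU hj h (Or.inl le_rfl)
  · exact single_mem_of_ge hU hj h.le (Or.inl (by dsimp only; omega))

lemma spanAbsLE_le (hn : (-1 : ℤˣ) ^ n = -ε) (hneg : n < 0)
    (hU : Invariant (Hop ε) (Eop ε (n : ℂ)) (Fop ε (n : ℂ)) U) (hU0 : U ≠ ⊥) :
    spanAbsLE ε (-n - 1) ≤ U := by
  obtain ⟨j, -, hj⟩ := exists_single_one_mem_of_not_le_supported coe_idx_injective Hop_apply hU.1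
    (S := ∅) (by rwa [Finsupp.supported_empty, le_bot_iff])
  rw [spanAbsLE, Submodule.span_le]
  rintro _ ⟨i, hi, rfl⟩
  rw [abs_le] at hi
  exact single_mem_of_ge hU (single_neg_sub_one_mem hn hneg hU hj) hi.2 (Or.inl (by omega))

lemma spanGE_le (hneg : n < 0) (hU : Invariant (Hop ε) (Eop ε (n : ℂ)) (Fop ε (n : ℂ)) U)
    {j : idx ε} (hj : Finsupp.single j 1 ∈ U) (hjn : -n - 1 < j.1) : spanGE ε (-n + 1) ≤ U := by
  rw [spanGE, Submodule.span_le]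
  rintro _ ⟨i, hi, rfl⟩
  rcases le_or_gt j.1 i.1 with h | h
  · exact single_mem_of_le hU hj h (Or.inr hjn)
  · exact single_mem_of_ge hU hj h.le (Or.inl (by omega))

lemma spanLE_le (hneg : n < 0) (hU : Invariant (Hop ε) (Eop ε (n : ℂ)) (Fop ε (n : ℂ)) U)
    {j : idx ε} (hj : Finsupp.single j 1 ∈ U) (hjn : j.1 < n + 1) : spanLE ε (n - 1) ≤ U := by
  rw [spanLE, Submodule.span_le]
  rintro _ ⟨i, hi, rfl⟩
  rcases le_or_gt i.1 j.1 with h | h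
  · exact single_mem_of_ge hU hj h (Or.inr hjn)
  · exact single_mem_of_le hU hj h.le (Or.inl (by omega))

lemma eq_spanAbsLE_or_eq_spanGE (hn : (-1 : ℤˣ) ^ n = -ε) (hneg : n < 0)
    (hU : Invariant (Hop ε) (Eop ε (n : ℂ)) (Fop ε (n : ℂ)) U) (hWU : spanAbsLE ε (-n - 1) ≤ U)
    (hUG : U ≤ spanGE ε (n + 1)) : U = spanAbsLE ε (-n - 1) ∨ U = spanGE ε (n + 1) := by
  by_cases hUW : U ≤ spanAbsLE ε (-n - 1)
  · exact Or.inl (le_antisymm hUW hWU)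
  rw [spanAbsLE_eq_supported] at hUW
  obtain ⟨j, hjW, hj⟩ := exists_single_one_mem_of_not_le_supported coe_idx_injective Hop_apply
    hU.1 hUW
  have hjG := hUG hj
  rw [spanGE_eq_supported, single_one_mem_supported_iff, Set.mem_ofPred_eq] at hjG
  have hjabs : -n - 1 < |j.1| := not_le.mp hjW
  refine Or.inr (le_antisymm hUG ?_)
  rw [← spanAbsLE_sup_spanGE hn hneg]
  exact sup_le hWU (spanGE_le hneg hU hj (by rw [lt_abs] at hjabs; omega))

lemma eq_spanAbsLE_or_eq_spanLE (hn : (-1 : ℤˣ) ^ n = -ε) (hneg : n < 0)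
    (hU : Invariant (Hop ε) (Eop ε (n : ℂ)) (Fop ε (n : ℂ)) U) (hWU : spanAbsLE ε (-n - 1) ≤ U)
    (hUL : U ≤ spanLE ε (-n - 1)) : U = spanAbsLE ε (-n - 1) ∨ U = spanLE ε (-n - 1) := by
  by_cases hUW : U ≤ spanAbsLE ε (-n - 1)
  · exact Or.inl (le_antisymm hUW hWU)
  rw [spanAbsLE_eq_supported] at hUW
  obtain ⟨j, hjW, hj⟩ := exists_single_one_mem_of_not_le_supported coe_idx_injective Hop_apply
    hU.1 hUW
  have hjL := hUL hj
  rw [spanLE_eq_supported, single_one_mem_supported_iff, Set.mem_ofPred_eq] at hjL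
  have hjabs : -n - 1 < |j.1| := not_le.mp hjW
  refine Or.inr (le_antisymm hUL ?_)
  rw [← spanAbsLE_sup_spanLE hn hneg]
  exact sup_le hWU (spanLE_le hneg hU hj (by rw [lt_abs] at hjabs; omega))

lemma spanGE_not_le_spanAbsLE (hn : (-1 : ℤˣ) ^ n = -ε) :
    ¬ spanGE ε (-n + 1) ≤ spanAbsLE ε (-n - 1) := fun h => by
  have hv := h (Submodule.subset_span
    ⟨⟨-n - 1 + 2, parity_shift (zpow_neg_sub_one hn) parity_two⟩, by dsimp only; omega, rfl⟩)
  rw [spanAbsLE_eq_supported, single_one_mem_supported_iff, Set.mem_ofPred_eq, abs_le] at hv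
  dsimp only at hv
  omega

lemma spanLE_not_le_spanAbsLE (hn : (-1 : ℤˣ) ^ n = -ε) :
    ¬ spanLE ε (n - 1) ≤ spanAbsLE ε (-n - 1) := fun h => by
  have hv := h (Submodule.subset_span
    ⟨⟨n + 1 + -2, parity_shift (parity_succ hn) parity_neg_two⟩, by dsimp only; omega, rfl⟩)
  rw [spanAbsLE_eq_supported, single_one_mem_supported_iff, Set.mem_ofPred_eq, abs_le] at hv
  dsimp only at hv
  omega

lemma spanAbsLE_ne_bot (hn : (-1 : ℤˣ) ^ n = -ε) (hneg : n < 0) :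
    spanAbsLE ε (-n - 1) ≠ ⊥ := by
  rw [Ne, Submodule.eq_bot_iff]
  intro h
  have hv := h _ (Submodule.subset_span
    ⟨⟨-n - 1, zpow_neg_sub_one hn⟩, (abs_of_nonneg (by omega : (0 : ℤ) ≤ -n - 1)).le, rfl⟩)
  exact one_ne_zero (Finsupp.single_eq_zero.mp hv)

end PrincipalSeries

/-- For `n ∈ ℤ_{-ε}`, `n < 0`, `k = -n`: in `π(ε,n)`,
`W = span{v_j : |j| ≤ k-1}` is a submodule of dimension `k`, the unique nonzero
irreducible submodule; and the quotient `V_ε/W` is completely reducible, being the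
direct sum of the two irreducible submodules given by the images of
`span{v_j : j ≥ k+1}` and `span{v_j : j ≤ -(k+1)}`. -/
theorem principal_series_n_neg_structure (ε : ℤˣ) (n : ℤ)
    (hn : (-1 : ℤˣ) ^ n = -ε) (hneg : n < 0) :
    Invariant (Hop ε) (Eop ε (n : ℂ)) (Fop ε (n : ℂ)) (spanAbsLE ε (-n - 1)) ∧
    (Module.finrank ℂ (spanAbsLE ε (-n - 1)) : ℤ) = -n ∧
    IsIrreducibleSubmodule (Hop ε) (Eop ε (n : ℂ)) (Fop ε (n : ℂ)) (spanAbsLE ε (-n - 1)) ∧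
    (∀ U : Submodule ℂ (V ε),
      IsIrreducibleSubmodule (Hop ε) (Eop ε (n : ℂ)) (Fop ε (n : ℂ)) U →
        U = spanAbsLE ε (-n - 1)) ∧
    ∃ (hH : spanAbsLE ε (-n - 1) ≤ (spanAbsLE ε (-n - 1)).comap (Hop ε))
      (hE : spanAbsLE ε (-n - 1) ≤ (spanAbsLE ε (-n - 1)).comap (Eop ε (n : ℂ)))
      (hF : spanAbsLE ε (-n - 1) ≤ (spanAbsLE ε (-n - 1)).comap (Fop ε (n : ℂ))),
      IsCompl ((spanGE ε (-n + 1)).map (spanAbsLE ε (-n - 1)).mkQ)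
        ((spanLE ε (n - 1)).map (spanAbsLE ε (-n - 1)).mkQ) ∧
      IsIrreducibleSubmodule
        (Submodule.mapQ _ _ (Hop ε) hH)
        (Submodule.mapQ _ _ (Eop ε (n : ℂ)) hE)
        (Submodule.mapQ _ _ (Fop ε (n : ℂ)) hF)
        ((spanGE ε (-n + 1)).map (spanAbsLE ε (-n - 1)).mkQ) ∧
      IsIrreducibleSubmodule
        (Submodule.mapQ _ _ (Hop ε) hH)
        (Submodule.mapQ _ _ (Eop ε (n : ℂ)) hE)
        (Submodule.mapQ _ _ (Fop ε (n : ℂ)) hF)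
        ((spanLE ε (n - 1)).map (spanAbsLE ε (-n - 1)).mkQ) := by
  have hW := invariant_spanAbsLE hn
  have hW0 := spanAbsLE_ne_bot hn hneg
  have hWirr : IsIrreducibleSubmodule (Hop ε) (Eop ε (n : ℂ)) (Fop ε (n : ℂ))
      (spanAbsLE ε (-n - 1)) :=
    ⟨hW, hW0, fun U hU hUW => or_iff_not_imp_left.mpr fun hU0 =>
      le_antisymm hUW (spanAbsLE_le hn hneg hU hU0)⟩
  refine ⟨hW, ?_, hWirr, fun U hU => ?_, hW.1, hW.2.1, hW.2.2, ?_, ?_, ?_⟩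
  · rw [finrank_spanAbsLE (zpow_neg_sub_one hn) (by omega)]
    omega
  · exact ((hU.2.2 _ hW (spanAbsLE_le hn hneg hU.1 hU.2.1)).resolve_left hW0).symm
  · apply isCompl_map_mkQ
    · rw [spanAbsLE_sup_spanLE hn hneg]
      exact (isCompl_spanGE_spanLE hn).disjoint
    · rw [sup_right_comm, spanAbsLE_sup_spanLE hn hneg, sup_comm]
      exact (isCompl_spanGE_spanLE hn).sup_eq_top
  · apply isIrreducibleSubmodule_map_mkQ
    · rw [spanAbsLE_sup_spanGE hn hneg]
      exact invariant_spanGE hn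
    · exact spanGE_not_le_spanAbsLE hn
    · rw [spanAbsLE_sup_spanGE hn hneg]
      exact fun U hU => eq_spanAbsLE_or_eq_spanGE hn hneg hU
  · apply isIrreducibleSubmodule_map_mkQ
    · rw [spanAbsLE_sup_spanLE hn hneg]
      exact invariant_spanLE hn
    · exact spanLE_not_le_spanAbsLE hn
    · rw [spanAbsLE_sup_spanLE hn hneg]
      exact fun U hU => eq_spanAbsLE_or_eq_spanLE hn hneg hU

end SL2Deform
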